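/- arXiv:1310.3031 — 4 statements merged into one kernel-verified Lean document; each statement's English description precedes it below -/
import Mathlib

section
/- Let G be a finite simple connected graph and let i, j be two adjacent vertices with d_i + d_j < √(2 vol G). Then the set S = {i, j} has positive modularity Q(S) > 0. Consequently, if the largest degree of G is smaller than √(vol G / 2), then G is not indivisible (i.e. G contains a subset of positive modularity). -/
open Matrix Finset

variable {n : ℕ}

/-- The real-valued degree of a vertex. -/
noncomputable def degR (G : SimpleGraph (Fin n)) [DecidableRel G.Adj] (i : Fin n) : ℝ :=
  (G.degree i : ℝ)

/-- The volume of a set of vertices: the sum of the degrees of its elements. -/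
noncomputable def volS (G : SimpleGraph (Fin n)) [DecidableRel G.Adj] (S : Finset (Fin n)) : ℝ :=
  ∑ i ∈ S, degR G i

/-- The volume of the graph: the sum of all degrees. -/
noncomputable def volG (G : SimpleGraph (Fin n)) [DecidableRel G.Adj] : ℝ :=
  ∑ i, degR G i

/-- `E(S)`: the set of edges with both endpoints in `S`. -/
def interiorEdges (G : SimpleGraph (Fin n)) [DecidableRel G.Adj] (S : Finset (Fin n)) :
    Finset (Sym2 (Fin n)) :=
  G.edgeFinset.filter (fun e => ∀ v ∈ e, v ∈ S)

/-- The modularity of a set of vertices: `Q(S) = 2|E(S)| - (vol S)²/(vol G)`. -/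
noncomputable def Qedge (G : SimpleGraph (Fin n)) [DecidableRel G.Adj] (S : Finset (Fin n)) : ℝ :=
  2 * (interiorEdges G S).card - volS G S ^ 2 / volG G

/-!
The single edge `ij` contributes `2|E(S)| = 2` to the modularity of `S = {i, j}`, while the
penalty `(d_i + d_j)² / vol G` is below `2` exactly when `d_i + d_j < √(2 vol G)`. Since
`2 √(x / 2) = √(2x)`, degrees below `√(vol G / 2)` make every edge qualify; and an edge exists,
because on a nonempty vertex set `0 ≤ d_v < √(vol G / 2)` forces `vol G > 0`.
-/

section Modularity

variable (G : SimpleGraph (Fin n)) [DecidableRel G.Adj]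

lemma degR_nonneg (i : Fin n) : 0 ≤ degR G i := Nat.cast_nonneg _

lemma degR_pos_of_adj {i j : Fin n} (h : G.Adj i j) : 0 < degR G i :=
  Nat.cast_pos.mpr (G.degree_pos_iff_exists_adj i |>.mpr ⟨j, h⟩)

lemma degR_le_volG (i : Fin n) : degR G i ≤ volG G :=
  Finset.single_le_sum (fun k _ => degR_nonneg G k) (Finset.mem_univ i)

lemma volG_pos_of_adj {i j : Fin n} (h : G.Adj i j) : 0 < volG G :=
  (degR_pos_of_adj G h).trans_le (degR_le_volG G i)

lemma exists_adj_of_volG_pos (h : 0 < volG G) : ∃ i j, G.Adj i j := by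
  obtain ⟨i, -, hi⟩ := Finset.exists_lt_of_sum_lt (s := Finset.univ) (f := fun _ => (0 : ℝ))
    (g := degR G) (by simpa [volG] using h)
  obtain ⟨j, hij⟩ := (G.degree_pos_iff_exists_adj i).mp (Nat.cast_pos.mp hi)
  exact ⟨i, j, hij⟩

lemma interiorEdges_pair {i j : Fin n} (h : G.Adj i j) : interiorEdges G {i, j} = {s(i, j)} := by
  ext e
  induction e using Sym2.ind with
  | _ a b =>
    simp only [interiorEdges, Finset.mem_filter, SimpleGraph.mem_edgeFinset,
      SimpleGraph.mem_edgeSet, Finset.mem_singleton, Sym2.forall_mem_pair, Finset.mem_insert,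
      Sym2.eq_iff]
    constructor
    · rintro ⟨hab, ha | ha, hb | hb⟩ <;> subst ha hb <;> simp_all
    · rintro (⟨rfl, rfl⟩ | ⟨rfl, rfl⟩) <;> simp [h, h.symm]

lemma Qedge_pair {i j : Fin n} (h : G.Adj i j) :
    Qedge G {i, j} = 2 - (degR G i + degR G j) ^ 2 / volG G := by
  rw [Qedge, interiorEdges_pair G h, volS, Finset.sum_pair h.ne]
  norm_num

lemma Qedge_pair_pos {i j : Fin n} (h : G.Adj i j)
    (hdeg : degR G i + degR G j < √(2 * volG G)) : 0 < Qedge G {i, j} := by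
  have hsq : (degR G i + degR G j) ^ 2 < 2 * volG G :=
    (Real.lt_sqrt (add_nonneg (degR_nonneg G i) (degR_nonneg G j))).mp hdeg
  rw [Qedge_pair G h, sub_pos, div_lt_iff₀ (volG_pos_of_adj G h)]
  linarith

end Modularity

lemma two_mul_sqrt_half (x : ℝ) : 2 * √(x / 2) = √(2 * x) := by
  rw [show 2 * x = 2 ^ 2 * (x / 2) by ring, Real.sqrt_mul (by positivity),
    Real.sqrt_sq zero_le_two]

/-- If `i ~ j` and `d_i + d_j < √(2 vol G)` then `S = {i,j}` has positive modularity.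
Consequently, if the largest degree of `G` is smaller than `√(vol G / 2)` then `G`
is not indivisible, i.e. it contains a subset of positive modularity. -/
theorem pair_positive_modularity (G : SimpleGraph (Fin n)) [DecidableRel G.Adj]
    (hG : G.Connected) :
    (∀ i j : Fin n, G.Adj i j → degR G i + degR G j < Real.sqrt (2 * volG G) →
      0 < Qedge G {i, j}) ∧
    ((∀ v : Fin n, degR G v < Real.sqrt (volG G / 2)) →
      ∃ S : Finset (Fin n), 0 < Qedge G S) := by
  refine ⟨fun i j h hdeg => Qedge_pair_pos G h hdeg, fun hsmall => ?_⟩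
  obtain ⟨v⟩ := hG.nonempty
  have hvol : 0 < volG G := by
    linarith [Real.sqrt_pos.mp ((degR_nonneg G v).trans_lt (hsmall v))]
  obtain ⟨i, j, h⟩ := exists_adj_of_volG_pos G hvol
  refine ⟨{i, j}, Qedge_pair_pos G h ?_⟩
  linarith [hsmall i, hsmall j, two_mul_sqrt_half (volG G)]
end

section
/- For any subset S of the vertex set V of a finite simple connected graph G on n vertices, the modularity satisfies Q(S) ≤ m(G) · |S| · |S̄| / n, where S̄ = V \ S and m(G) is the algebraic modularity of G. -/
open Matrix Finset

variable {n : ℕ}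

/-- The modularity matrix `M = A - d dᵀ / vol G`. -/
noncomputable def modM (G : SimpleGraph (Fin n)) [DecidableRel G.Adj] :
    Matrix (Fin n) (Fin n) ℝ :=
  G.adjMatrix ℝ - (volG G)⁻¹ • Matrix.vecMulVec (degR G) (degR G)

/-- The 0/1 characteristic vector of a set of vertices. -/
def indic (S : Finset (Fin n)) : Fin n → ℝ := fun i => if i ∈ S then 1 else 0

/-- The modularity of a set of vertices: `Q(S) = 𝟙_Sᵀ M 𝟙_S`. -/
noncomputable def Qmat (G : SimpleGraph (Fin n)) [DecidableRel G.Adj] (S : Finset (Fin n)) : ℝ :=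
  indic S ⬝ᵥ (modM G *ᵥ indic S)

/-- The algebraic modularity `m(G) = max { xᵀMx / xᵀx : x ≠ 0, xᵀ𝟙 = 0 }`. -/
noncomputable def algMod (G : SimpleGraph (Fin n)) [DecidableRel G.Adj] : ℝ :=
  sSup {r : ℝ | ∃ x : Fin n → ℝ, x ≠ 0 ∧ (∑ i, x i) = 0 ∧
    r = (x ⬝ᵥ (modM G *ᵥ x)) / (x ⬝ᵥ x)}

/-! `M` is symmetric with zero row sums, so its quadratic form does not change when a multiple
of `𝟙` is added to the argument. Hence `Q(S)` is also the quadratic form at the centred vector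
`𝟙_S - (|S|/n) 𝟙`, which is orthogonal to `𝟙` and has squared norm `|S| |S̄| / n`; the
Rayleigh-quotient definition of `m(G)` then gives the bound. -/

namespace Matrix

variable {ι : Type*} [Fintype ι]

theorem dotProduct_mulVec_sub_smul_one {R : Type*} [CommRing R] {M : Matrix ι ι R}
    (hrow : M *ᵥ 1 = 0) (hcol : 1 ᵥ* M = 0) (x : ι → R) (c : R) :
    (x - c • 1) ⬝ᵥ (M *ᵥ (x - c • 1)) = x ⬝ᵥ (M *ᵥ x) := by
  rw [mulVec_sub, mulVec_smul, hrow, smul_zero, sub_zero, sub_dotProduct, smul_dotProduct,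
    dotProduct_mulVec 1, hcol, zero_dotProduct, smul_zero, sub_zero]

theorem sq_le_dotProduct_self (x : ι → ℝ) (i : ι) : x i ^ 2 ≤ x ⬝ᵥ x := by
  simpa only [dotProduct, sq] using
    Finset.single_le_sum (fun j _ => mul_self_nonneg (x j)) (Finset.mem_univ i)

theorem dotProduct_mulVec_le_sum_abs_mul (M : Matrix ι ι ℝ) (x : ι → ℝ) :
    x ⬝ᵥ (M *ᵥ x) ≤ (∑ i, ∑ j, |M i j|) * (x ⬝ᵥ x) := by
  have hterm : ∀ i j, x i * (M i j * x j) ≤ |M i j| * (x ⬝ᵥ x) := fun i j =>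
    calc x i * (M i j * x j) ≤ |x i * (M i j * x j)| := le_abs_self _
      _ = |M i j| * (|x i| * |x j|) := by simp only [abs_mul]; ring
      _ ≤ |M i j| * (x ⬝ᵥ x) := by
        gcongr
        nlinarith [sq_le_dotProduct_self x i, sq_le_dotProduct_self x j, sq_abs (x i),
          sq_abs (x j), abs_nonneg (x i), abs_nonneg (x j)]
  calc x ⬝ᵥ (M *ᵥ x) = ∑ i, ∑ j, x i * (M i j * x j) := by
        simp only [dotProduct, mulVec, Finset.mul_sum]
    _ ≤ ∑ i, ∑ j, |M i j| * (x ⬝ᵥ x) :=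
        Finset.sum_le_sum fun i _ => Finset.sum_le_sum fun j _ => hterm i j
    _ = (∑ i, ∑ j, |M i j|) * (x ⬝ᵥ x) := by simp only [Finset.sum_mul]

end Matrix

section Modularity

variable (G : SimpleGraph (Fin n)) [DecidableRel G.Adj]

theorem transpose_modM : (modM G)ᵀ = modM G := by
  simp [modM, SimpleGraph.transpose_adjMatrix]

theorem degR_eq_zero_of_volG_eq_zero (h : volG G = 0) (i : Fin n) : degR G i = 0 :=
  (Finset.sum_eq_zero_iff_of_nonneg (fun j _ => Nat.cast_nonneg (G.degree j))).mp h i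
    (Finset.mem_univ i)

theorem modM_mulVec_one : modM G *ᵥ 1 = 0 := by
  ext i
  have hvol : degR G i * volG G * (volG G)⁻¹ = degR G i := by
    rcases eq_or_ne (volG G) 0 with h | h
    · simp [degR_eq_zero_of_volG_eq_zero G h i]
    · exact mul_inv_cancel_right₀ h _
  have hadj : (G.adjMatrix ℝ *ᵥ 1) i = degR G i := by
    simp [degR]
  simp only [modM, sub_mulVec, Pi.sub_apply, hadj, smul_mulVec, vecMulVec_mulVec, dotProduct_one,
    Pi.smul_apply, op_smul_eq_mul, smul_eq_mul, Pi.zero_apply]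
  change degR G i - (volG G)⁻¹ * (degR G i * volG G) = 0
  linear_combination -hvol

theorem one_vecMul_modM : 1 ᵥ* modM G = 0 := by
  rw [← transpose_modM, vecMul_transpose, modM_mulVec_one]

theorem bddAbove_rayleigh :
    BddAbove {r : ℝ | ∃ x : Fin n → ℝ, x ≠ 0 ∧ (∑ i, x i) = 0 ∧
      r = (x ⬝ᵥ (modM G *ᵥ x)) / (x ⬝ᵥ x)} := by
  refine ⟨∑ i, ∑ j, |modM G i j|, ?_⟩
  rintro r ⟨x, -, -, rfl⟩
  exact div_le_of_le_mul₀ (Finset.sum_nonneg fun i _ => mul_self_nonneg (x i)) (by positivity)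
    (dotProduct_mulVec_le_sum_abs_mul (modM G) x)

theorem dotProduct_modM_mulVec_le_algMod_mul (x : Fin n → ℝ) (hx : ∑ i, x i = 0) :
    x ⬝ᵥ (modM G *ᵥ x) ≤ algMod G * (x ⬝ᵥ x) := by
  rcases eq_or_ne x 0 with rfl | hx0
  · simp
  have hpos : 0 < x ⬝ᵥ x :=
    (Finset.sum_nonneg fun i _ => mul_self_nonneg (x i)).lt_of_ne'
      (dotProduct_self_eq_zero.not.mpr hx0)
  rw [← div_le_iff₀ hpos]
  exact le_csSup (bddAbove_rayleigh G) ⟨x, hx0, hx, rfl⟩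

end Modularity

section CenteredIndicator

variable (S : Finset (Fin n))

theorem indic_dotProduct_one : indic S ⬝ᵥ 1 = S.card := by
  simp [indic, dotProduct_one]

theorem indic_dotProduct_self : indic S ⬝ᵥ indic S = S.card := by
  simp [indic, dotProduct]

theorem card_div_mul_cancel : (S.card / n : ℝ) * n = S.card :=
  div_mul_cancel_of_imp fun h => by
    obtain rfl : n = 0 := by exact_mod_cast h
    simp [Finset.eq_empty_of_isEmpty S]

theorem cast_card_compl : (Sᶜ.card : ℝ) = n - S.card := by
  rw [Finset.card_compl, Fintype.card_fin, Nat.cast_sub (by simpa using S.card_le_univ)]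

noncomputable def centeredIndic : Fin n → ℝ := indic S - ((S.card : ℝ) / n) • 1

theorem sum_centeredIndic : ∑ i, centeredIndic S i = 0 := by
  rw [← dotProduct_one, centeredIndic, sub_dotProduct, smul_dotProduct, indic_dotProduct_one,
    one_dotProduct_one, Fintype.card_fin, smul_eq_mul, card_div_mul_cancel, sub_self]

theorem centeredIndic_dotProduct_self :
    centeredIndic S ⬝ᵥ centeredIndic S = S.card * Sᶜ.card / n := by
  set c : ℝ := S.card / n
  have hc : c * n = S.card := card_div_mul_cancel S
  simp only [centeredIndic, sub_dotProduct, dotProduct_sub, smul_dotProduct, dotProduct_smul,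
    indic_dotProduct_self, indic_dotProduct_one, dotProduct_comm 1 (indic S), one_dotProduct_one,
    Fintype.card_fin, smul_eq_mul]
  rw [mul_div_right_comm]
  linear_combination (c - 1) * hc - c * cast_card_compl S

theorem Qmat_eq_centeredIndic (G : SimpleGraph (Fin n)) [DecidableRel G.Adj] :
    Qmat G S = centeredIndic S ⬝ᵥ (modM G *ᵥ centeredIndic S) :=
  (dotProduct_mulVec_sub_smul_one (modM_mulVec_one G) (one_vecMul_modM G) _ _).symm

end CenteredIndicator

theorem modularity_le_algMod_general (G : SimpleGraph (Fin n)) [DecidableRel G.Adj]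
    (S : Finset (Fin n)) :
    Qmat G S ≤ algMod G * (S.card : ℝ) * (Sᶜ.card : ℝ) / (n : ℝ) := by
  rw [Qmat_eq_centeredIndic, mul_assoc, mul_div_assoc, ← centeredIndic_dotProduct_self]
  exact dotProduct_modM_mulVec_le_algMod_mul G _ (sum_centeredIndic S)

/-- For any subset `S` of the vertices of a finite simple connected graph `G` on `n`
vertices, `Q(S) ≤ m(G)·|S|·|S̄|/n`. -/
theorem modularity_le_algMod (G : SimpleGraph (Fin n)) [DecidableRel G.Adj]
    (hG : G.Connected) (S : Finset (Fin n)) :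
    Qmat G S ≤ algMod G * (S.card : ℝ) * (Sᶜ.card : ℝ) / (n : ℝ) :=
  modularity_le_algMod_general G S
end

section
/- Let A be the (possibly weighted, loops allowed) adjacency matrix of a finite simple connected graph G on n vertices. Let λ ∈ ℝ and u ∈ ℝⁿ be such that u has at least two entries of opposite signs and Au ≥ λu componentwise. Let ℓ be the number of eigenvalues of A (counted with multiplicity) that are ≥ λ. Then u induces at most ℓ positive strong nodal domains on G. -/
open Matrix Finset

variable {n : ℕ}

/-- The simple graph underlying a symmetric matrix `A`: distinct vertices `i, j`
are adjacent iff `A i j ≠ 0` (loops are discarded). -/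
def matGraph (A : Matrix (Fin n) (Fin n) ℝ) : SimpleGraph (Fin n) where
  Adj i j := i ≠ j ∧ (A i j ≠ 0 ∨ A j i ≠ 0)
  symm := ⟨fun i j h => ⟨h.1.symm, h.2.symm⟩⟩
  loopless := ⟨fun i h => h.1 rfl⟩

/-- `S` is a positive strong nodal domain of `G` induced by `u`: a maximal
connected subset of `{i : u i > 0}`. -/
def IsPosStrongNodalDomain (G : SimpleGraph (Fin n)) (u : Fin n → ℝ)
    (S : Set (Fin n)) : Prop :=
  S ⊆ {i | 0 < u i} ∧ (G.induce S).Connected ∧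
    ∀ T : Set (Fin n), S ⊆ T → T ⊆ {i | 0 < u i} → (G.induce T).Connected → T = S

/-!
Restrict `u` to each positive strong nodal domain `S`. By maximality, every neighbour of `S`
outside `S` has `u ≤ 0`, so nonnegativity of `A` gives `A (u|_S) ≥ A u ≥ λ u` on `S`, and the
restriction has Rayleigh quotient at least `λ`. Distinct domains are disjoint and not joined by
edges, so the restrictions are orthogonal both for `x ⬝ᵥ y` and for `x ⬝ᵥ A *ᵥ y`; hence the
Rayleigh quotient is at least `λ` on their whole span, whose dimension is the number of domains.
Such a subspace meets the span of the eigenvectors with eigenvalue `< λ` only in `0`, so its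
dimension is at most the number of eigenvalues `≥ λ`.
-/

namespace LinearMap.IsOrthoᵢ

variable {R M ι : Type*} [CommSemiring R] [AddCommMonoid M] [Module R M] [Fintype ι]
  {B : M →ₗ[R] M →ₗ[R] R} {v : ι → M}

theorem apply_sum_smul_self (hv : B.IsOrthoᵢ v) (c : ι → R) :
    B (∑ i, c i • v i) (∑ i, c i • v i) = ∑ i, c i * c i * B (v i) (v i) := by
  simp only [map_sum, LinearMap.sum_apply, map_smul, LinearMap.smul_apply, smul_eq_mul]
  refine sum_congr rfl fun i _ => ?_
  rw [sum_eq_single i (fun j _ hji => by simp [hv hji]) (by simp)]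
  ring

theorem apply_self_nonneg_of_mem_span [LinearOrder R] [IsOrderedRing R] [ExistsAddOfLE R]
    (hv : B.IsOrthoᵢ v) (hnonneg : ∀ i, 0 ≤ B (v i) (v i)) {x : M}
    (hx : x ∈ Submodule.span R (Set.range v)) : 0 ≤ B x x := by
  obtain ⟨c, rfl⟩ := (Submodule.mem_span_range_iff_exists_fun R).mp hx
  rw [hv.apply_sum_smul_self]
  exact sum_nonneg fun i _ => mul_nonneg (mul_self_nonneg _) (hnonneg i)

end LinearMap.IsOrthoᵢ

namespace Matrix.IsHermitian

variable {ι : Type*} [Fintype ι] [DecidableEq ι] {A : Matrix ι ι ℝ} (hA : A.IsHermitian)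

theorem dotProduct_eq_sum_eigenvectorBasis (x y : ι → ℝ) :
    x ⬝ᵥ y = ∑ i, (⇑(hA.eigenvectorBasis i) ⬝ᵥ x) * (⇑(hA.eigenvectorBasis i) ⬝ᵥ y) := by
  have := (hA.eigenvectorBasis).sum_inner_mul_inner (WithLp.toLp 2 x) (WithLp.toLp 2 y)
  simp only [EuclideanSpace.inner_eq_star_dotProduct, star_trivial] at this
  rw [dotProduct_comm x, ← this]
  simp_rw [dotProduct_comm y]

theorem eigenvectorBasis_dotProduct_mulVec (i : ι) (x : ι → ℝ) :
    ⇑(hA.eigenvectorBasis i) ⬝ᵥ (A *ᵥ x) =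
      hA.eigenvalues i * (⇑(hA.eigenvectorBasis i) ⬝ᵥ x) := by
  rw [dotProduct_mulVec, ← mulVec_transpose, ← conjTranspose_eq_transpose_of_trivial, hA.eq,
    mulVec_eigenvectorBasis, smul_dotProduct, smul_eq_mul]

theorem dotProduct_mulVec_sub_eq_sum (lam : ℝ) (x : ι → ℝ) :
    x ⬝ᵥ (A *ᵥ x) - lam * (x ⬝ᵥ x) =
      ∑ i, (hA.eigenvalues i - lam) * (⇑(hA.eigenvectorBasis i) ⬝ᵥ x) ^ 2 := by
  rw [hA.dotProduct_eq_sum_eigenvectorBasis x, hA.dotProduct_eq_sum_eigenvectorBasis x, mul_sum,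
    ← sum_sub_distrib]
  simp only [eigenvectorBasis_dotProduct_mulVec]
  exact sum_congr rfl fun i _ => by ring

theorem finrank_le_card_eigenvalues_ge {lam : ℝ} {W : Submodule ℝ (ι → ℝ)}
    (hW : ∀ x ∈ W, lam * (x ⬝ᵥ x) ≤ x ⬝ᵥ (A *ᵥ x)) :
    Module.finrank ℝ W ≤ #{i | lam ≤ hA.eigenvalues i} := by
  let P : Matrix {i // lam ≤ hA.eigenvalues i} ι ℝ := fun i => ⇑(hA.eigenvectorBasis i)
  have hinj : Function.Injective (P.mulVecLin.domRestrict W) := by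
    rw [← LinearMap.ker_eq_bot, Submodule.eq_bot_iff]
    rintro ⟨x, hxW⟩ hPx
    have hhigh : ∀ i, lam ≤ hA.eigenvalues i → ⇑(hA.eigenvectorBasis i) ⬝ᵥ x = 0 :=
      fun i hi => congrFun hPx ⟨i, hi⟩
    have hterm : ∀ i, (hA.eigenvalues i - lam) * (⇑(hA.eigenvectorBasis i) ⬝ᵥ x) ^ 2 ≤ 0 := by
      intro i
      rcases le_or_gt lam (hA.eigenvalues i) with hi | hi
      · simp [hhigh i hi]
      · exact mul_nonpos_of_nonpos_of_nonneg (by linarith) (sq_nonneg _)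
    have hsum : 0 ≤ ∑ i, (hA.eigenvalues i - lam) * (⇑(hA.eigenvectorBasis i) ⬝ᵥ x) ^ 2 := by
      rw [← hA.dotProduct_mulVec_sub_eq_sum]
      exact sub_nonneg.mpr (hW x hxW)
    have hterm_eq := (sum_eq_zero_iff_of_nonpos fun i _ => hterm i).mp
      (le_antisymm (sum_nonpos fun i _ => hterm i) hsum)
    have hzero : ∀ i, ⇑(hA.eigenvectorBasis i) ⬝ᵥ x = 0 := fun i =>
      (le_or_gt lam (hA.eigenvalues i)).elim (hhigh i) fun hi => by
        simpa [(sub_neg.mpr hi).ne] using hterm_eq i (mem_univ _)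
    have : x ⬝ᵥ x = 0 := by simp [hA.dotProduct_eq_sum_eigenvectorBasis x, hzero]
    simpa using dotProduct_self_eq_zero.mp this
  simpa [Fintype.card_subtype] using LinearMap.finrank_le_finrank_of_injective hinj

end Matrix.IsHermitian

theorem matGraph_adj_of_ne_zero {A : Matrix (Fin n) (Fin n) ℝ} {i j : Fin n} (hij : i ≠ j)
    (h : A i j ≠ 0) : (matGraph A).Adj i j :=
  ⟨hij, Or.inl h⟩

theorem Set.indicator_dotProduct_indicator_of_disjoint {ι R : Type*} [Fintype ι]
    [NonUnitalNonAssocSemiring R] {S T : Set ι} (h : Disjoint S T) (u w : ι → R) :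
    S.indicator u ⬝ᵥ T.indicator w = 0 := by
  refine sum_eq_zero fun i _ => ?_
  by_cases hi : i ∈ S
  · rw [Set.indicator_of_notMem (h.notMem_of_mem_left hi), mul_zero]
  · rw [Set.indicator_of_notMem hi, zero_mul]

namespace IsPosStrongNodalDomain

section Graph

variable {G : SimpleGraph (Fin n)} {u : Fin n → ℝ} {S T : Set (Fin n)}

theorem indicator_ne_zero (hS : IsPosStrongNodalDomain G u S) : S.indicator u ≠ 0 := by
  obtain ⟨⟨i, hi⟩⟩ := hS.2.1.nonempty
  exact fun h => (hS.1 hi).ne' (by simpa [Set.indicator_of_mem hi] using congrFun h i)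

theorem mem_of_adj (hS : IsPosStrongNodalDomain G u S) {i j : Fin n} (hi : i ∈ S)
    (hij : G.Adj i j) (hj : 0 < u j) : j ∈ S := by
  have hconn : (G.induce (S ∪ {i, j})).Connected :=
    SimpleGraph.induce_union_connected hS.2.1.preconnected
      (SimpleGraph.induce_pair_connected_of_adj hij).preconnected ⟨i, hi, by simp⟩
  have hpos : S ∪ {i, j} ⊆ {x | 0 < u x} :=
    Set.union_subset hS.1 (Set.insert_subset (hS.1 hi) (Set.singleton_subset_iff.mpr hj))
  rw [← hS.2.2 _ Set.subset_union_left hpos hconn]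
  simp

theorem disjoint (hS : IsPosStrongNodalDomain G u S) (hT : IsPosStrongNodalDomain G u T)
    (hST : S ≠ T) : Disjoint S T := by
  rw [Set.disjoint_iff_inter_eq_empty, ← Set.not_nonempty_iff_eq_empty]
  rintro ⟨x, hxS, hxT⟩
  have hconn : (G.induce (S ∪ T)).Connected :=
    SimpleGraph.induce_union_connected hS.2.1.preconnected hT.2.1.preconnected ⟨x, hxS, hxT⟩
  have hunion := hS.2.2 _ Set.subset_union_left (Set.union_subset hS.1 hT.1) hconn
  exact hST (hT.2.2 S (hunion ▸ Set.subset_union_right) hS.1 hS.2.1)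

theorem not_adj (hS : IsPosStrongNodalDomain G u S) (hT : IsPosStrongNodalDomain G u T)
    (hST : S ≠ T) {i j : Fin n} (hi : i ∈ S) (hj : j ∈ T) : ¬G.Adj i j := fun hij =>
  Set.disjoint_left.mp (hS.disjoint hT hST) (hS.mem_of_adj hi hij (hT.1 hj)) hj

end Graph

section Matrix

variable {A : Matrix (Fin n) (Fin n) ℝ} {u : Fin n → ℝ} {S T : Set (Fin n)}

theorem apply_eq_zero (hS : IsPosStrongNodalDomain (matGraph A) u S)
    (hT : IsPosStrongNodalDomain (matGraph A) u T) (hST : S ≠ T) {i j : Fin n} (hi : i ∈ S)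
    (hj : j ∈ T) : A i j = 0 :=
  not_not.mp fun h =>
    hS.not_adj hT hST hi hj (matGraph_adj_of_ne_zero ((hS.disjoint hT hST).ne_of_mem hi hj) h)

theorem indicator_dotProduct_mulVec_indicator (hS : IsPosStrongNodalDomain (matGraph A) u S)
    (hT : IsPosStrongNodalDomain (matGraph A) u T) (hST : S ≠ T) :
    S.indicator u ⬝ᵥ (A *ᵥ T.indicator u) = 0 := by
  rw [dotProduct]
  refine sum_eq_zero fun i _ => ?_
  by_cases hi : i ∈ S
  · suffices (A *ᵥ T.indicator u) i = 0 by rw [this, mul_zero]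
    rw [mulVec, dotProduct]
    refine sum_eq_zero fun j _ => ?_
    by_cases hj : j ∈ T
    · rw [hS.apply_eq_zero hT hST hi hj, zero_mul]
    · rw [Set.indicator_of_notMem hj, mul_zero]
  · rw [Set.indicator_of_notMem hi, zero_mul]

theorem mulVec_le_mulVec_indicator (hA : ∀ i j, 0 ≤ A i j)
    (hS : IsPosStrongNodalDomain (matGraph A) u S) {i : Fin n} (hi : i ∈ S) :
    (A *ᵥ u) i ≤ (A *ᵥ S.indicator u) i := by
  rw [mulVec, mulVec, dotProduct, dotProduct]
  refine sum_le_sum fun j _ => ?_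
  by_cases hj : j ∈ S
  · rw [Set.indicator_of_mem hj]
  · rw [Set.indicator_of_notMem hj, mul_zero]
    rcases (hA i j).eq_or_lt with hij | hij
    · rw [← hij, zero_mul]
    · refine mul_nonpos_of_nonneg_of_nonpos hij.le (not_lt.mp fun hj' => hj ?_)
      exact hS.mem_of_adj hi (matGraph_adj_of_ne_zero (ne_of_mem_of_not_mem hi hj) hij.ne') hj'

theorem mul_dotProduct_le_dotProduct_mulVec (hA : ∀ i j, 0 ≤ A i j)
    (hS : IsPosStrongNodalDomain (matGraph A) u S) {lam : ℝ}
    (hAu : ∀ i, lam * u i ≤ (A *ᵥ u) i) :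
    lam * (S.indicator u ⬝ᵥ S.indicator u) ≤ S.indicator u ⬝ᵥ (A *ᵥ S.indicator u) := by
  rw [dotProduct, dotProduct, mul_sum]
  refine sum_le_sum fun i _ => ?_
  by_cases hi : i ∈ S
  · rw [Set.indicator_of_mem hi, mul_left_comm]
    exact mul_le_mul_of_nonneg_left ((hAu i).trans (hS.mulVec_le_mulVec_indicator hA hi))
      (hS.1 hi).le
  · simp [Set.indicator_of_notMem hi]

end Matrix

end IsPosStrongNodalDomain

theorem pos_strong_nodal_domains_bound_general (A : Matrix (Fin n) (Fin n) ℝ)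
    (hA : A.IsHermitian) (hnonneg : ∀ i j, 0 ≤ A i j)
    (lam : ℝ) (u : Fin n → ℝ)
    (hAu : ∀ i, lam * u i ≤ (A *ᵥ u) i) :
    {S : Set (Fin n) | IsPosStrongNodalDomain (matGraph A) u S}.ncard ≤
      (Finset.univ.filter (fun i => lam ≤ hA.eigenvalues i)).card := by
  classical
  set D := {S : Set (Fin n) | IsPosStrongNodalDomain (matGraph A) u S}
  let v : D → Fin n → ℝ := fun S => (S : Set (Fin n)).indicator u
  have hdisj : ∀ S T : D, S ≠ T → Disjoint (S : Set (Fin n)) T := fun S T hST =>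
    S.2.disjoint T.2 (Subtype.coe_ne_coe.mpr hST)
  have hli : LinearIndependent ℝ v :=
    LinearMap.linearIndependent_of_isOrthoᵢ (B := dotProductBilin ℝ ℝ)
      (fun S T hST => Set.indicator_dotProduct_indicator_of_disjoint (hdisj S T hST) u u)
      (fun S => by
        rw [dotProductBilin_apply_apply, ne_eq, dotProduct_self_eq_zero]
        exact S.2.indicator_ne_zero)
  let B := toBilin' A - lam • dotProductBilin ℝ ℝ
  have hB : ∀ x y, B x y = x ⬝ᵥ (A *ᵥ y) - lam * (x ⬝ᵥ y) := by simp [B, toBilin'_apply']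
  have hBortho : B.IsOrthoᵢ v := fun S T hST => by
    change B (v S) (v T) = 0
    rw [hB, S.2.indicator_dotProduct_mulVec_indicator T.2 (Subtype.coe_ne_coe.mpr hST),
      Set.indicator_dotProduct_indicator_of_disjoint (hdisj S T hST), mul_zero, sub_zero]
  calc D.ncard = Module.finrank ℝ (Submodule.span ℝ (Set.range v)) := by
        rw [finrank_span_eq_card hli, ← Nat.card_coe_set_eq, Nat.card_eq_fintype_card]
    _ ≤ _ := hA.finrank_le_card_eigenvalues_ge fun x hx => by
        simpa [hB] using hBortho.apply_self_nonneg_of_mem_span (fun S => by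
          rw [hB, sub_nonneg]; exact S.2.mul_dotProduct_le_dotProduct_mulVec hnonneg hAu) hx

/-- Let `A` be the (possibly weighted, loops allowed) adjacency matrix of a finite
simple connected graph. If `u` has two entries of opposite signs and `Au ≥ λu`
componentwise, then `u` induces at most `ℓ` positive strong nodal domains, where
`ℓ` is the number of eigenvalues of `A` that are `≥ λ` (with multiplicity). -/
theorem pos_strong_nodal_domains_bound (A : Matrix (Fin n) (Fin n) ℝ)
    (hA : A.IsHermitian) (hnonneg : ∀ i j, 0 ≤ A i j)
    (hconn : (matGraph A).Connected)
    (lam : ℝ) (u : Fin n → ℝ)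
    (hpos : ∃ i, 0 < u i) (hneg : ∃ j, u j < 0)
    (hAu : ∀ i, lam * u i ≤ (A *ᵥ u) i) :
    {S : Set (Fin n) | IsPosStrongNodalDomain (matGraph A) u S}.ncard ≤
      (Finset.univ.filter (fun i => lam ≤ hA.eigenvalues i)).card :=
  pos_strong_nodal_domains_bound_general A hA hnonneg lam u hAu
end

section
/- Let G be a finite simple connected graph and let S_1, …, S_k (k ≥ 1) be pairwise disjoint subsets of V such that vol S_i ≤ (1/2) vol G and 2|E(S_i)| > |∂S_i| for every i. Then Q(S_i) > 0 for every i, and the modularity matrix M has at least k−1 positive eigenvalues (counted with multiplicity). -/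
open Matrix Finset

variable {n : ℕ}

/-- `∂S`: the set of edges with exactly one endpoint in `S`. -/
def boundaryEdges (G : SimpleGraph (Fin n)) [DecidableRel G.Adj] (S : Finset (Fin n)) :
    Finset (Sym2 (Fin n)) :=
  G.edgeFinset.filter (fun e => (∃ v ∈ e, v ∈ S) ∧ (∃ v ∈ e, v ∉ S))

/-!
Write `x = ∑ᵢ cᵢ 1_{Sᵢ}`. Then `xᵀ A x = cᵀ B c`, where `B i j` counts the ordered adjacent pairs
in `Sᵢ × Sⱼ`. Disjointness gives `∑_{j ≠ i} B i j ≤ |∂Sᵢ| < 2|E(Sᵢ)| = B i i`, so `B` is strictly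
diagonally dominant and the adjacency form is positive on every nonzero such `x`. On the hyperplane
`d ⬝ x = 0` the rank-one term of `M` vanishes, so `M` is positive definite on a space of dimension
at least `k - 1`; this space meets the span of the eigenvectors with eigenvalue `≤ 0` trivially,
which bounds `k - 1` by the number of positive eigenvalues. Positivity of `Q(Sᵢ)` is the identity
`vol Sᵢ = 2|E(Sᵢ)| + |∂Sᵢ|` together with `(vol Sᵢ)² / vol G ≤ vol Sᵢ / 2`.
-/
open Module
open scoped Function

theorem LinearMap.finrank_le_finrank_ker_add_one {K V : Type*} [Field K] [AddCommGroup V]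
    [Module K V] [FiniteDimensional K V] (f : V →ₗ[K] K) :
    finrank K V ≤ finrank K (LinearMap.ker f) + 1 := by
  have hrange := (LinearMap.range f).finrank_le
  rw [finrank_self] at hrange
  have := f.finrank_range_add_finrank_ker
  omega

namespace Matrix

variable {ι : Type*} [Fintype ι]

theorem sum_sq_mul_sub_sum_abs_le_dotProduct_mulVec [DecidableEq ι] {B : Matrix ι ι ℝ}
    (hB : B.IsSymm) (c : ι → ℝ) :
    ∑ i, c i ^ 2 * (B i i - ∑ j ∈ univ.erase i, |B i j|) ≤ c ⬝ᵥ B *ᵥ c := by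
  have hswap : ∑ i, ∑ j, c j ^ 2 * |B i j| = ∑ i, ∑ j, c i ^ 2 * |B i j| := by
    rw [sum_comm]; simp only [hB.apply]
  have hterm : ∀ i j, (if i = j then c i ^ 2 * (B i i + |B i i|) else 0)
      - (c i ^ 2 * |B i j| + c j ^ 2 * |B i j|) / 2 ≤ c i * (B i j * c j) := by
    intro i j
    split_ifs with h
    · subst h; exact le_of_eq (by ring)
    · have hamgm : |c i| * |c j| * |B i j| ≤ (c i ^ 2 + c j ^ 2) / 2 * |B i j| :=
        mul_le_mul_of_nonneg_right
          (by nlinarith [sq_nonneg (|c i| - |c j|), sq_abs (c i), sq_abs (c j)]) (abs_nonneg _)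
      have := neg_abs_le (c i * c j * B i j)
      rw [abs_mul, abs_mul] at this
      linarith
  calc ∑ i, c i ^ 2 * (B i i - ∑ j ∈ univ.erase i, |B i j|)
      = ∑ i, ∑ j, ((if i = j then c i ^ 2 * (B i i + |B i i|) else 0)
          - (c i ^ 2 * |B i j| + c j ^ 2 * |B i j|) / 2) := by
        simp only [sum_sub_distrib, sum_ite_eq, mem_univ, if_true, ← sum_div, sum_add_distrib,
          hswap, ← mul_sum]
        rw [add_self_div_two, ← sum_sub_distrib]
        refine sum_congr rfl fun i _ => ?_
        rw [← add_sum_erase _ _ (mem_univ i)]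
        ring
    _ ≤ ∑ i, ∑ j, c i * (B i j * c j) := sum_le_sum fun i _ => sum_le_sum fun j _ => hterm i j
    _ = c ⬝ᵥ B *ᵥ c := by simp only [dotProduct, mulVec, mul_sum]

theorem dotProduct_mulVec_pos_of_sum_abs_lt_diag [DecidableEq ι] {B : Matrix ι ι ℝ}
    (hB : B.IsSymm) (hdom : ∀ i, ∑ j ∈ univ.erase i, |B i j| < B i i) {c : ι → ℝ}
    (hc : c ≠ 0) : 0 < c ⬝ᵥ B *ᵥ c := by
  obtain ⟨i, hi⟩ := Function.ne_iff.mp hc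
  refine lt_of_lt_of_le ?_ (sum_sq_mul_sub_sum_abs_le_dotProduct_mulVec hB c)
  exact sum_pos' (fun j _ => mul_nonneg (sq_nonneg _) (sub_nonneg.2 (hdom j).le))
    ⟨i, mem_univ i, mul_pos (sq_pos_of_ne_zero hi) (sub_pos.2 (hdom i))⟩

theorem IsHermitian.dotProduct_mulVec_eq_sum_eigenvalues_mul_sq [DecidableEq ι]
    {M : Matrix ι ι ℝ} (hM : M.IsHermitian) (x : ι → ℝ) :
    x ⬝ᵥ M *ᵥ x =
      ∑ j, hM.eigenvalues j * (star (hM.eigenvectorUnitary : Matrix ι ι ℝ) *ᵥ x) j ^ 2 := by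
  set U : Matrix ι ι ℝ := (hM.eigenvectorUnitary : Matrix ι ι ℝ)
  have hUx : x ᵥ* U = star U *ᵥ x := by
    rw [star_eq_conjTranspose, conjTranspose_eq_transpose_of_trivial, mulVec_transpose]
  conv_lhs => rw [hM.spectral_theorem, Unitary.conjStarAlgAut_apply]
  rw [← mulVec_mulVec, ← mulVec_mulVec, dotProduct_mulVec, hUx]
  simp only [dotProduct, mulVec_diagonal, Function.comp_apply, RCLike.ofReal_real_eq_id, id]
  exact sum_congr rfl fun j _ => by ring

theorem IsHermitian.finrank_le_card_eigenvalues_pos [DecidableEq ι] {E : Type*}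
    [AddCommGroup E] [Module ℝ E] [FiniteDimensional ℝ E] {M : Matrix ι ι ℝ}
    (hM : M.IsHermitian) (Φ : E →ₗ[ℝ] ι → ℝ) (hΦ : ∀ c, c ≠ 0 → 0 < Φ c ⬝ᵥ M *ᵥ Φ c) :
    finrank ℝ E ≤ #{j | 0 < hM.eigenvalues j} := by
  set P : Finset ι := {j | 0 < hM.eigenvalues j}
  set U : Matrix ι ι ℝ := (hM.eigenvectorUnitary : Matrix ι ι ℝ)
  let π : E →ₗ[ℝ] P → ℝ := LinearMap.funLeft ℝ ℝ Subtype.val ∘ₗ (star U).mulVecLin ∘ₗ Φ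
  by_contra! hlt
  obtain ⟨c, hc, hc0⟩ := Submodule.exists_mem_ne_zero_of_ne_bot
    (LinearMap.ker_ne_bot_of_finrank_lt (f := π) (by simpa using hlt))
  have hpos := hΦ c hc0
  rw [hM.dotProduct_mulVec_eq_sum_eigenvalues_mul_sq] at hpos
  refine hpos.not_ge (sum_nonpos fun j _ => ?_)
  by_cases hj : j ∈ P
  · have : (star U *ᵥ Φ c) j = 0 := congrFun (LinearMap.mem_ker.mp hc) ⟨j, hj⟩
    simp [U, this]
  · exact mul_nonpos_of_nonpos_of_nonneg (by simpa [P] using hj) (sq_nonneg _)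

end Matrix

section Membership

variable {α ι : Type*} [DecidableEq α]

def membershipMatrix (R : Type*) [Zero R] [One R] (S : ι → Finset α) : Matrix α ι R :=
  of fun u i => if u ∈ S i then 1 else 0

theorem transpose_membershipMatrix_mul_mul_apply {R : Type*} [Fintype α] [NonAssocSemiring R]
    (S : ι → Finset α) (A : Matrix α α R) (i j : ι) :
    ((membershipMatrix R S)ᵀ * A * membershipMatrix R S) i j = ∑ u ∈ S i, ∑ v ∈ S j, A u v := by
  simp only [membershipMatrix, mul_apply, transpose_apply, of_apply, ite_mul, one_mul, zero_mul,
    sum_ite_mem, univ_inter, mul_ite, mul_one, mul_zero]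
  exact sum_comm

end Membership

namespace SimpleGraph

variable {V : Type*} (G : SimpleGraph V) [DecidableRel G.Adj]

theorem sum_sum_adjMatrix_eq_card_interedges (s t : Finset V) :
    ∑ u ∈ s, ∑ v ∈ t, G.adjMatrix ℝ u v = #(G.interedges s t) := by
  rw [← sum_product' (f := fun u v => G.adjMatrix ℝ u v), interedges_def, card_filter]
  push_cast
  simp [adjMatrix_apply]

theorem sum_card_interedges_le_card_interedges_compl [Fintype V] [DecidableEq V] {ι : Type*}
    [Fintype ι] [DecidableEq ι] {S : ι → Finset V} (hS : Pairwise (Disjoint on S)) (i : ι) :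
    ∑ j ∈ univ.erase i, #(G.interedges (S i) (S j)) ≤ #(G.interedges (S i) (S i)ᶜ) := by
  rw [← card_biUnion fun j _ j' _ hjj' => G.interedges_disjoint_right _ (hS hjj'),
    ← interedges_biUnion_right]
  refine card_le_card (G.interedges_mono subset_rfl fun v hv => ?_)
  obtain ⟨j, hj, hvj⟩ := mem_biUnion.mp hv
  exact mem_compl.mpr fun hvi => Finset.disjoint_left.mp (hS (ne_of_mem_erase hj)) hvj hvi

end SimpleGraph

section Modularity

variable (G : SimpleGraph (Fin n)) [DecidableRel G.Adj]

theorem card_interedges_self_eq_two_mul_card_interiorEdges (S : Finset (Fin n)) :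
    #(G.interedges S S) = 2 * #(interiorEdges G S) := by
  have hmaps : ∀ p ∈ G.interedges S S, s(p.1, p.2) ∈ interiorEdges G S := by
    rintro ⟨a, b⟩ hp
    rw [G.mk_mem_interedges_iff] at hp
    simp only [interiorEdges, mem_filter, SimpleGraph.mem_edgeFinset, SimpleGraph.mem_edgeSet,
      Sym2.mem_iff]
    exact ⟨hp.2.2, by rintro v (rfl | rfl) <;> tauto⟩
  rw [card_eq_sum_card_fiberwise hmaps, sum_const_nat fun e he => ?_, mul_comm]
  induction e using Sym2.ind with | h a b => ?_
  simp only [interiorEdges, mem_filter, SimpleGraph.mem_edgeFinset, SimpleGraph.mem_edgeSet,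
    Sym2.mem_iff] at he
  obtain ⟨hab, hS⟩ := he
  have hfiber : {p ∈ G.interedges S S | s(p.1, p.2) = s(a, b)} = {(a, b), (b, a)} := by
    ext ⟨u, v⟩
    simp only [mem_filter, G.mk_mem_interedges_iff, Sym2.eq_iff, mem_insert, mem_singleton,
      Prod.mk.injEq]
    constructor
    · exact fun h => h.2
    · rintro (⟨rfl, rfl⟩ | ⟨rfl, rfl⟩)
      · exact ⟨⟨hS _ (.inl rfl), hS _ (.inr rfl), hab⟩, .inl ⟨rfl, rfl⟩⟩
      · exact ⟨⟨hS _ (.inr rfl), hS _ (.inl rfl), hab.symm⟩, .inr ⟨rfl, rfl⟩⟩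
  rw [hfiber, card_pair (by simp [hab.ne])]

theorem card_interedges_compl_eq_card_boundaryEdges (S : Finset (Fin n)) :
    #(G.interedges S Sᶜ) = #(boundaryEdges G S) := by
  refine card_nbij (fun p => s(p.1, p.2)) ?_ ?_ ?_
  · rintro ⟨a, b⟩ hp
    rw [mem_coe, G.mk_mem_interedges_iff, mem_compl] at hp
    simp only [mem_coe, boundaryEdges, mem_filter, SimpleGraph.mem_edgeFinset,
      SimpleGraph.mem_edgeSet, Sym2.mem_iff]
    exact ⟨hp.2.2, ⟨a, .inl rfl, hp.1⟩, ⟨b, .inr rfl, hp.2.1⟩⟩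
  · rintro ⟨a, b⟩ hp ⟨c, d⟩ hq h
    simp only [mem_coe, G.mk_mem_interedges_iff, mem_compl] at hp hq
    rcases Sym2.eq_iff.mp h with ⟨rfl, rfl⟩ | ⟨rfl, rfl⟩
    · rfl
    · exact absurd hp.1 hq.2.1
  · intro e he
    induction e using Sym2.ind with | h a b => ?_
    simp only [mem_coe, boundaryEdges, mem_filter, SimpleGraph.mem_edgeFinset,
      SimpleGraph.mem_edgeSet, Sym2.mem_iff] at he
    obtain ⟨hab, ⟨u, hu, huS⟩, ⟨v, hv, hvS⟩⟩ := he
    rcases hu with rfl | rfl <;> rcases hv with rfl | rfl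
    · exact absurd huS hvS
    · exact ⟨(u, v), by simp [G.mk_mem_interedges_iff, huS, hvS, hab], rfl⟩
    · exact ⟨(u, v), by simp [G.mk_mem_interedges_iff, huS, hvS, hab.symm], Sym2.eq_swap⟩
    · exact absurd huS hvS

theorem volS_eq_two_mul_card_interiorEdges_add_card_boundaryEdges (S : Finset (Fin n)) :
    volS G S = 2 * #(interiorEdges G S) + #(boundaryEdges G S) := by
  have hdeg : ∀ u, degR G u = ∑ v ∈ S, G.adjMatrix ℝ u v + ∑ v ∈ Sᶜ, G.adjMatrix ℝ u v := by
    intro u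
    rw [sum_add_sum_compl]
    simp [degR, SimpleGraph.degree, SimpleGraph.neighborFinset_eq_filter,
      SimpleGraph.adjMatrix_apply, sum_boole]
  rw [volS, sum_congr rfl fun u _ => hdeg u, sum_add_distrib,
    G.sum_sum_adjMatrix_eq_card_interedges, G.sum_sum_adjMatrix_eq_card_interedges,
    card_interedges_self_eq_two_mul_card_interiorEdges, card_interedges_compl_eq_card_boundaryEdges]
  push_cast
  ring

theorem Qedge_pos {S : Finset (Fin n)} (hvol : volS G S ≤ volG G / 2)
    (hedge : (#(boundaryEdges G S) : ℝ) < 2 * #(interiorEdges G S)) :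
    0 < Qedge G S := by
  have hvolS := volS_eq_two_mul_card_interiorEdges_add_card_boundaryEdges G S
  have hvolS_nonneg : 0 ≤ volS G S := sum_nonneg fun _ _ => Nat.cast_nonneg _
  have hbdry_nonneg : (0 : ℝ) ≤ #(boundaryEdges G S) := Nat.cast_nonneg _
  have hvolG_nonneg : 0 ≤ volG G := sum_nonneg fun _ _ => Nat.cast_nonneg _
  have hsq : volS G S ^ 2 / volG G ≤ volS G S / 2 := by
    rcases hvolG_nonneg.eq_or_lt with h0 | hpos
    · rw [← h0, div_zero]; positivity
    · rw [div_le_iff₀ hpos]; nlinarith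
  rw [Qedge]
  linarith

theorem dotProduct_modM_mulVec_of_dotProduct_eq_zero {x : Fin n → ℝ} (hx : degR G ⬝ᵥ x = 0) :
    x ⬝ᵥ modM G *ᵥ x = x ⬝ᵥ G.adjMatrix ℝ *ᵥ x := by
  rw [modM, sub_mulVec, dotProduct_sub, smul_mulVec, dotProduct_smul, vecMulVec_mulVec, hx]
  simp

theorem dotProduct_adjMatrix_mulVec_membershipMatrix_pos {k : ℕ} {S : Fin k → Finset (Fin n)}
    (hS : Pairwise (Disjoint on S))
    (hedge : ∀ i, (#(boundaryEdges G (S i)) : ℝ) < 2 * #(interiorEdges G (S i)))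
    {c : Fin k → ℝ} (hc : c ≠ 0) :
    0 < membershipMatrix ℝ S *ᵥ c ⬝ᵥ G.adjMatrix ℝ *ᵥ (membershipMatrix ℝ S *ᵥ c) := by
  set N := membershipMatrix ℝ S
  set B := Nᵀ * G.adjMatrix ℝ * N with hBdef
  have hB : ∀ i j, B i j = #(G.interedges (S i) (S j)) := fun i j => by
    rw [hBdef, transpose_membershipMatrix_mul_mul_apply, G.sum_sum_adjMatrix_eq_card_interedges]
  have hsymm : B.IsSymm := by
    simp only [B, IsSymm, transpose_mul, transpose_transpose, G.transpose_adjMatrix,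
      Matrix.mul_assoc]
  have hdom : ∀ i, ∑ j ∈ univ.erase i, |B i j| < B i i := fun i => by
    simp only [hB, Nat.abs_cast, card_interedges_self_eq_two_mul_card_interiorEdges]
    calc ∑ j ∈ univ.erase i, (#(G.interedges (S i) (S j)) : ℝ)
        ≤ #(boundaryEdges G (S i)) := by
          rw [← card_interedges_compl_eq_card_boundaryEdges]
          exact_mod_cast G.sum_card_interedges_le_card_interedges_compl hS i
      _ < _ := by push_cast; exact hedge i
  have hpos := dotProduct_mulVec_pos_of_sum_abs_lt_diag hsymm hdom hc
  rwa [← mulVec_mulVec, ← mulVec_mulVec, dotProduct_mulVec, vecMul_transpose] at hpos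

end Modularity

theorem communities_positive_eigenvalues_general (G : SimpleGraph (Fin n))
    [DecidableRel G.Adj] (hM : (modM G).IsHermitian)
    (k : ℕ) (S : Fin k → Finset (Fin n))
    (hdisj : ∀ i j, i ≠ j → Disjoint (S i) (S j))
    (hvol : ∀ i, volS G (S i) ≤ volG G / 2)
    (hedge : ∀ i, ((boundaryEdges G (S i)).card : ℝ) < 2 * ((interiorEdges G (S i)).card : ℝ)) :
    (∀ i, 0 < Qedge G (S i)) ∧
    k - 1 ≤ (Finset.univ.filter (fun i => 0 < hM.eigenvalues i)).card := by
  refine ⟨fun i => Qedge_pos G (hvol i) (hedge i), ?_⟩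
  set N := membershipMatrix ℝ S
  set f := dotProductBilin ℝ ℝ (degR G) ∘ₗ N.mulVecLin
  have hK : k ≤ finrank ℝ (LinearMap.ker f) + 1 := by
    simpa using f.finrank_le_finrank_ker_add_one
  have hpos :=
    hM.finrank_le_card_eigenvalues_pos (N.mulVecLin ∘ₗ (LinearMap.ker f).subtype) fun c hc => by
      rw [LinearMap.comp_apply, Submodule.subtype_apply,
        dotProduct_modM_mulVec_of_dotProduct_eq_zero G (LinearMap.mem_ker.mp c.2)]
      exact dotProduct_adjMatrix_mulVec_membershipMatrix_pos G hdisj hedge (by simpa using hc)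
  omega

/-- If `S₁, …, S_k` (`k ≥ 1`) are pairwise disjoint subsets of the vertices with
`vol Sᵢ ≤ (vol G)/2` and `2|E(Sᵢ)| > |∂Sᵢ|` for every `i`, then `Q(Sᵢ) > 0` for
every `i` and the modularity matrix has at least `k-1` positive eigenvalues
(with multiplicity). -/
theorem communities_positive_eigenvalues (G : SimpleGraph (Fin n))
    [DecidableRel G.Adj] (hG : G.Connected) (hM : (modM G).IsHermitian)
    (k : ℕ) (hk : 1 ≤ k) (S : Fin k → Finset (Fin n))
    (hdisj : ∀ i j, i ≠ j → Disjoint (S i) (S j))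
    (hvol : ∀ i, volS G (S i) ≤ volG G / 2)
    (hedge : ∀ i, ((boundaryEdges G (S i)).card : ℝ) < 2 * ((interiorEdges G (S i)).card : ℝ)) :
    (∀ i, 0 < Qedge G (S i)) ∧
    k - 1 ≤ (Finset.univ.filter (fun i => 0 < hM.eigenvalues i)).card :=
  communities_positive_eigenvalues_general G hM k S hdisj hvol hedge
end
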